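/- arXiv:2212.02150 — 5 statements merged into one kernel-verified Lean document; each statement's English description precedes it below -/
import Mathlib

section
/- For a generator ∂ satisfying (H1)–(H4), and for any μ ∈ N and any x in the support of μ, one has ∂(μ − δ_x) = ∂μ if and only if ∂(μ + δ_x) = ∂μ. Equivalently, H_x(μ − δ_x) = H_x(μ), where H_x(μ) := 1{∂(μ + δ_x) ≠ ∂μ}. -/
/-- The Dirac counting measure at a point, in the model of counting measures
on `X` as functions `X → ℕ` (pointwise order and addition). -/
noncomputable def delta {X : Type*} (x : X) : X → ℕ := Set.indicator {x} 1

/-- A generator: a map on counting measures satisfying (H1) thinning, (H2) additivity,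
(H3) idempotency and (H4) consistency. -/
def IsGenerator {X : Type*} (D : (X → ℕ) → (X → ℕ)) : Prop :=
  (∀ μ, D μ ≤ μ) ∧
  (∀ μ x, D μ x ≠ 0 → D (μ + delta x) = D μ + delta x) ∧
  (∀ μ μ' : X → ℕ, μ' ≤ μ - D μ → D (D μ + μ') = D μ) ∧
  (∀ μ μ' ψ : X → ℕ, μ' ≤ μ → D μ = D μ' → D (μ + ψ) = D (μ' + ψ))

/-- The hull operator associated with a generator. -/
def hull {X : Type*} (D : (X → ℕ) → (X → ℕ)) (μ : X → ℕ) : Set X :=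
  {x | D (μ + delta x) = D μ}

open scoped Classical

/-- The indicator `H_x(μ) = 1{∂(μ + δ_x) ≠ ∂μ}`, as a real number. -/
noncomputable def Hf {X : Type*} (D : (X → ℕ) → (X → ℕ)) (x : X) (μ : X → ℕ) : ℝ :=
  if D (μ + delta x) = D μ then 0 else 1

/-! If `∂(μ - δ_x) = ∂μ`, then (H4) applied to `μ - δ_x ≤ μ` with `ψ = δ_x` gives
`∂(μ + δ_x) = ∂μ`, since `μ - δ_x + δ_x = μ` for `x ∈ supp μ`. Conversely, if
`∂(μ + δ_x) = ∂μ` then `x ∉ supp ∂μ` by (H2), so `∂μ ≤ μ - δ_x ≤ μ`, and (H3) shows that `∂`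
is constant on every such sandwich `∂μ ≤ ν ≤ μ`. -/

section

variable {X : Type*}

theorem delta_apply_self (x : X) : delta x x = 1 := by simp [delta]

theorem delta_apply_of_ne {x y : X} (h : y ≠ x) : delta x y = 0 := by simp [delta, h]

theorem sub_delta_add_delta {μ : X → ℕ} {x : X} (hx : μ x ≠ 0) : μ - delta x + delta x = μ := by
  funext y
  rcases eq_or_ne y x with rfl | hy
  · simp only [Pi.add_apply, Pi.sub_apply, delta_apply_self]; omega
  · simp [delta_apply_of_ne hy]

theorem le_sub_delta_of_apply_eq_zero {ν μ : X → ℕ} {x : X} (hle : ν ≤ μ) (hx : ν x = 0) :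
    ν ≤ μ - delta x := by
  intro y
  rcases eq_or_ne y x with rfl | hy
  · simp [hx]
  · simpa [delta_apply_of_ne hy] using hle y

namespace IsGenerator

variable {D : (X → ℕ) → (X → ℕ)}

theorem apply_eq_zero_of_add_delta_eq (hD : IsGenerator D) {μ : X → ℕ} {x : X}
    (h : D (μ + delta x) = D μ) : D μ x = 0 := by
  by_contra hne
  have := congrFun (hD.2.1 μ x hne) x
  simp [h, delta_apply_self] at this

theorem apply_eq_of_le_of_le (hD : IsGenerator D) {μ ν : X → ℕ} (h₁ : D μ ≤ ν) (h₂ : ν ≤ μ) :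
    D ν = D μ := by
  have := hD.2.2.1 μ (ν - D μ) (tsub_le_tsub_right h₂ _)
  rwa [add_tsub_cancel_of_le h₁] at this

end IsGenerator

end

theorem generator_minus_point {X : Type*} (D : (X → ℕ) → (X → ℕ))
    (hD : IsGenerator D) (μ : X → ℕ) (x : X) (hx : μ x ≠ 0) :
    D (μ - delta x) = D μ ↔ D (μ + delta x) = D μ := by
  constructor
  · intro h
    simpa only [sub_delta_add_delta hx] using hD.2.2.2 μ (μ - delta x) (delta x) tsub_le_self h.symm
  · intro h
    exact hD.apply_eq_of_le_of_le
      (le_sub_delta_of_apply_eq_zero (hD.1 μ) (hD.apply_eq_zero_of_add_delta_eq h)) tsub_le_self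
end

section
/- For a generator ∂ and any μ ∈ N, the hull of μ coincides with the hull of ∂μ: [μ] = [∂μ], where [μ] := {x ∈ X : ∂(μ + δ_x) = ∂μ}. -/
open scoped Classical

namespace IsGenerator

variable {X : Type*} {D : (X → ℕ) → (X → ℕ)}

theorem apply_idem (hD : IsGenerator D) (μ : X → ℕ) : D (D μ) = D μ := by
  simpa using hD.2.2.1 μ 0 fun _ => Nat.zero_le _

theorem apply_self_add (hD : IsGenerator D) (μ ψ : X → ℕ) : D (D μ + ψ) = D (μ + ψ) :=
  (hD.2.2.2 μ (D μ) ψ (hD.1 μ) (hD.apply_idem μ).symm).symm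

end IsGenerator

/-- For a generator `D` and any `μ`, the hull of `μ` coincides with the
hull of `D μ`: `[μ] = [∂μ]`. -/
theorem hull_generator_eq {X : Type*} (D : (X → ℕ) → (X → ℕ))
    (hD : IsGenerator D) (μ : X → ℕ) :
    hull D μ = hull D (D μ) := by
  ext x
  change D (μ + delta x) = D μ ↔ D (D μ + delta x) = D (D μ)
  rw [hD.apply_self_add, hD.apply_idem]
end

section
/- Let ∂ be a generator with indicator H_x(μ) = 1{∂(μ + δ_x) ≠ ∂μ} and difference operator D_x G(μ) = G(μ + δ_x) − G(μ). Then for every m ≥ 2, all z_1, …, z_m ∈ X and μ ∈ N, the cyclic product vanishes: D_{z_1}H_{z_2}(μ) · D_{z_2}H_{z_3}(μ) ⋯ D_{z_m}H_{z_1}(μ) = 0. -/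
open scoped Classical

/-!
If every factor were nonzero, each `z (i + 1)` would lie in the hull of `μ + δ_{z i}` but not in
the hull of `μ`. Put `ν = μ + ∑ k, δ_{z k}`. By consistency (H4) every `z j` lies in the hull of
`ν`, so by additivity (H2) `∂ν` puts no mass on any `z j`, i.e. `∂ν ≤ μ`. Idempotency (H3) then
gives `∂μ = ∂ν = ∂(μ + δ_{z j})`, so every `z j` lies in the hull of `μ`: a contradiction.
-/

lemma eq_of_delta_apply_ne_zero {X : Type*} {x y : X} (h : delta x y ≠ 0) : y = x := by
  by_contra hyx
  simp [delta, hyx] at h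

lemma add_delta_ne_self {X : Type*} (f : X → ℕ) (x : X) : f + delta x ≠ f := fun h => by
  simpa [delta] using congrFun h x

lemma le_of_le_add_of_apply_eq_zero {X : Type*} {f μ ψ : X → ℕ} (hf : f ≤ μ + ψ)
    (hψ : ∀ y, ψ y ≠ 0 → f y = 0) : f ≤ μ := fun y => by
  by_cases hy : ψ y = 0
  · simpa [hy] using hf y
  · simp [hψ y hy]

namespace IsGenerator

variable {X : Type*} {D : (X → ℕ) → (X → ℕ)}

lemma eq_of_le_of_le (hD : IsGenerator D) {ν ρ : X → ℕ} (hνρ : D ν ≤ ρ) (hρν : ρ ≤ ν) :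
    D ρ = D ν := by
  have hsplit : D ν + (ρ - D ν) = ρ := add_tsub_cancel_of_le hνρ
  rw [← hsplit]
  exact hD.2.2.1 ν (ρ - D ν) (tsub_le_tsub_right hρν _)

lemma apply_eq_zero_of_mem_hull (hD : IsGenerator D) {ν : X → ℕ} {x : X}
    (hx : x ∈ hull D ν) : D ν x = 0 := by
  by_contra hne
  have hadd := hD.2.1 ν x hne
  rw [hx] at hadd
  exact add_delta_ne_self _ _ hadd.symm

lemma hull_mono (hD : IsGenerator D) : Monotone (hull D) := by
  intro μ μ' hμ x hx
  obtain ⟨ψ, rfl⟩ : ∃ ψ, μ' = μ + ψ := ⟨μ' - μ, (add_tsub_cancel_of_le hμ).symm⟩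
  have hcons := hD.2.2.2 (μ + delta x) μ ψ le_self_add hx
  rwa [add_right_comm] at hcons

lemma mem_hull_of_Hf_add_delta_sub_ne_zero (hD : IsGenerator D) {μ : X → ℕ} {a b : X}
    (h : Hf D b (μ + delta a) - Hf D b μ ≠ 0) :
    b ∈ hull D (μ + delta a) ∧ b ∉ hull D μ := by
  by_cases hb : b ∈ hull D μ
  · have hb' : b ∈ hull D (μ + delta a) := hD.hull_mono le_self_add hb
    simp_all [Hf, hull]
  · refine ⟨?_, hb⟩
    by_contra hb'
    simp_all [Hf, hull]

lemma mem_hull_of_forall_exists_mem_hull_add_delta (hD : IsGenerator D) {ι : Type*}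
    [Fintype ι] {μ : X → ℕ} {z : ι → X} (h : ∀ j, ∃ i, z j ∈ hull D (μ + delta (z i)))
    (j : ι) : z j ∈ hull D μ := by
  set ν := μ + ∑ k, delta (z k) with hν
  have hν_mem : ∀ j, z j ∈ hull D ν := fun j => by
    obtain ⟨i, hi⟩ := h j
    have hsplit : ν = μ + delta (z i) + ∑ k ∈ Finset.univ.erase i, delta (z k) := by
      rw [hν, ← Finset.add_sum_erase _ _ (Finset.mem_univ i), add_assoc]
    rw [hsplit]
    exact hD.hull_mono le_self_add hi
  have hle : D ν ≤ μ := le_of_le_add_of_apply_eq_zero (hD.1 ν) fun y hy => by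
    rw [Finset.sum_apply] at hy
    obtain ⟨k, -, hk⟩ := Finset.exists_ne_zero_of_sum_ne_zero hy
    rw [eq_of_delta_apply_ne_zero hk]
    exact hD.apply_eq_zero_of_mem_hull (hν_mem k)
  have hμ : D μ = D ν := hD.eq_of_le_of_le hle le_self_add
  have hμj : D (μ + delta (z j)) = D ν := hD.eq_of_le_of_le (hle.trans le_self_add)
    (add_le_add_right (Finset.single_le_sum (f := fun k => delta (z k)) (fun _ _ => zero_le)
      (Finset.mem_univ j)) μ)
  exact hμj.trans hμ.symm

end IsGenerator

theorem cyclic_product_vanishes_general {X : Type*} (D : (X → ℕ) → (X → ℕ))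
    (hD : IsGenerator D) (m : ℕ) [NeZero m]
    (z : Fin m → X) (μ : X → ℕ) :
    ∏ i : Fin m, (Hf D (z (i + 1)) (μ + delta (z i)) - Hf D (z (i + 1)) μ) = 0 := by
  by_contra hprod
  have hfactor (i : Fin m) : z (i + 1) ∈ hull D (μ + delta (z i)) ∧ z (i + 1) ∉ hull D μ :=
    hD.mem_hull_of_Hf_add_delta_sub_ne_zero fun h0 =>
      hprod (Finset.prod_eq_zero (Finset.mem_univ i) h0)
  have hcycle (j : Fin m) : ∃ i, z j ∈ hull D (μ + delta (z i)) :=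
    ⟨j - 1, by simpa using (hfactor (j - 1)).1⟩
  exact (hfactor 0).2 (hD.mem_hull_of_forall_exists_mem_hull_add_delta hcycle _)

/-- the cyclic product of first-order differences vanishes:
`D_{z_1}H_{z_2}(μ) ⋯ D_{z_m}H_{z_1}(μ) = 0` for `m ≥ 2`. -/
theorem cyclic_product_vanishes {X : Type*} (D : (X → ℕ) → (X → ℕ))
    (hD : IsGenerator D) (m : ℕ) [NeZero m] (hm : 2 ≤ m)
    (z : Fin m → X) (μ : X → ℕ) :
    ∏ i : Fin m, (Hf D (z (i + 1)) (μ + delta (z i)) - Hf D (z (i + 1)) μ) = 0 :=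
  cyclic_product_vanishes_general D hD m z μ
end

section
/- Let ∂ be a generator satisfying ∂δ_x = δ_x for all x ∈ X. Define a relation y ≺ x if and only if ∂(δ_y + δ_x) = ∂δ_x (i.e., \bar H_y(δ_x) = 1). Then ≺ is a strict partial order on X: it is irreflexive, antisymmetric, and transitive. -/
open scoped Classical

/-!
Transitivity holds for arbitrary measures: (H4) lets `∂(α + β) = ∂β` absorb a common summand `γ`
and `∂(β + γ) = ∂γ` absorb `α`, and the two sums `α + β + γ` and `β + γ + α` coincide.
Irreflexivity is (H2) at `μ = δ_x`, which lies in its own support since `∂δ_x = δ_x`, and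
asymmetry follows from irreflexivity and transitivity.
-/

theorem delta_self {X : Type*} (x : X) : delta x x = 1 := by
  simp [delta]

namespace IsGenerator

variable {X : Type*} {D : (X → ℕ) → (X → ℕ)}

theorem map_add_add_of_map_add_eq (hD : IsGenerator D) {μ ν : X → ℕ} (h : D (ν + μ) = D μ)
    (ψ : X → ℕ) : D (ν + μ + ψ) = D (μ + ψ) :=
  hD.2.2.2 _ _ ψ le_add_self h

theorem map_add_trans (hD : IsGenerator D) {α β γ : X → ℕ} (hαβ : D (α + β) = D β)
    (hβγ : D (β + γ) = D γ) : D (α + γ) = D γ :=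
  calc D (α + γ) = D (β + γ + α) := by rw [hD.map_add_add_of_map_add_eq hβγ, add_comm]
    _ = D (α + β + γ) := by rw [add_comm, add_assoc]
    _ = D γ := by rw [hD.map_add_add_of_map_add_eq hαβ, hβγ]

theorem map_add_delta_ne_of_apply_ne_zero (hD : IsGenerator D) {μ : X → ℕ} {x : X}
    (hx : D μ x ≠ 0) : D (μ + delta x) ≠ D μ := by
  intro h
  have hx_add := congrFun (hD.2.1 μ x hx) x
  rw [h, Pi.add_apply, delta_self] at hx_add
  omega

end IsGenerator

/-- if `∂δ_x = δ_x` for all `x`, the relation `y ≺ x ⟺ ∂(δ_y + δ_x) = ∂δ_x`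
is a strict partial order: irreflexive, antisymmetric and transitive. -/
theorem prec_strict_partial_order {X : Type*} (D : (X → ℕ) → (X → ℕ))
    (hD : IsGenerator D) (hnt : ∀ x : X, D (delta x) = delta x) :
    (∀ x : X, ¬ D (delta x + delta x) = D (delta x)) ∧
    (∀ x y : X, D (delta x + delta y) = D (delta y) →
      ¬ D (delta y + delta x) = D (delta x)) ∧
    (∀ x y z : X, D (delta z + delta y) = D (delta y) →
      D (delta y + delta x) = D (delta x) →
      D (delta z + delta x) = D (delta x)) := by
  have irrefl : ∀ x : X, ¬ D (delta x + delta x) = D (delta x) := fun x =>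
    hD.map_add_delta_ne_of_apply_ne_zero (by simp [hnt x, delta_self])
  exact ⟨irrefl, fun x y hxy hyx => irrefl x (hD.map_add_trans hxy hyx),
    fun x y z hzy hyx => hD.map_add_trans hzy hyx⟩
end

section
/- On X = R^d, the map sending a finite counting measure μ to its restriction to the set of extreme points (vertices) of the convex hull of the support of μ is a generator, i.e., it satisfies the thinning property (H1), the additivity property (H2), the idempotency property (H3), and the consistency property (H4). -/
open scoped Classical

/-- The restriction of a finite counting measure `μ` on `ℝ^d` to the set of extreme
points (vertices) of the convex hull of its support: `x` is kept iff
`x ∉ conv(supp μ \ {x})`. -/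
noncomputable def vertexGen {d : ℕ} (μ : EuclideanSpace ℝ (Fin d) →₀ ℕ) :
    EuclideanSpace ℝ (Fin d) →₀ ℕ :=
  μ.filter fun x => x ∉ convexHull ℝ ((↑μ.support : Set (EuclideanSpace ℝ (Fin d))) \ {x})

/-!
By the Krein–Milman theorem, a finite set has the same convex hull as the set of extreme points
of its hull. Hence `vertexGen μ`, which is `μ` restricted to those extreme points, determines
`conv (supp μ)`. Adding mass at points of `conv (supp μ)` does not change this hull, and an
extreme point of a larger hull that lies in a smaller one is extreme there too; (H1)–(H4)
follow by restricting sums of measures to a fixed set of vertices.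
-/

open Set Finsupp

section FiniteHull

variable {E : Type*} [AddCommGroup E] [Module ℝ E] [TopologicalSpace E] [T2Space E]
  [IsTopologicalAddGroup E] [ContinuousSMul ℝ E] [LocallyConvexSpace ℝ E] {S : Set E}

theorem Set.Finite.convexHull_extremePoints_convexHull (hS : S.Finite) :
    convexHull ℝ ((convexHull ℝ S).extremePoints ℝ) = convexHull ℝ S := by
  have hext : ((convexHull ℝ S).extremePoints ℝ).Finite :=
    hS.subset extremePoints_convexHull_subset
  rw [← (hext.isCompact_convexHull (𝕜 := ℝ)).isClosed.closure_eq]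
  exact closure_convexHull_extremePoints (hS.isCompact_convexHull (𝕜 := ℝ))
    (convex_convexHull ℝ S)

theorem Set.Finite.notMem_convexHull_sdiff_iff (hS : S.Finite) {x : E} (hx : x ∈ S) :
    x ∉ convexHull ℝ (S \ {x}) ↔ x ∈ (convexHull ℝ S).extremePoints ℝ := by
  constructor
  · intro hx'
    by_contra hnot
    have hsub : (convexHull ℝ S).extremePoints ℝ ⊆ S \ {x} := fun y hy =>
      ⟨extremePoints_convexHull_subset hy, fun hyx => hnot (mem_singleton_iff.1 hyx ▸ hy)⟩
    apply hx'
    apply convexHull_mono hsub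
    rw [hS.convexHull_extremePoints_convexHull]
    exact subset_convexHull ℝ S hx
  · intro hext hmem
    rw [(convex_convexHull ℝ S).mem_extremePoints_iff_mem_sdiff_convexHull_sdiff] at hext
    exact hext.2 (convexHull_mono (sdiff_subset_sdiff_left (subset_convexHull ℝ S)) hmem)

end FiniteHull

def vertices {E M : Type*} [AddCommGroup E] [Module ℝ E] [Zero M] (μ : E →₀ M) : Set E :=
  (convexHull ℝ (μ.support : Set E)).extremePoints ℝ

section VertexGen

variable {d : ℕ} {μ ν : EuclideanSpace ℝ (Fin d) →₀ ℕ}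

local notation "X" => EuclideanSpace ℝ (Fin d)

theorem vertexGen_eq_filter (μ : X →₀ ℕ) :
    vertexGen μ = μ.filter (· ∈ vertices μ) := by
  ext x
  rw [vertexGen, filter_apply, filter_apply]
  by_cases hx : x ∈ (μ.support : Set (X))
  · exact if_congr (μ.support.finite_toSet.notMem_convexHull_sdiff_iff hx) rfl rfl
  · simp [notMem_support_iff.1 hx]

theorem vertexGen_le (μ : X →₀ ℕ) : vertexGen μ ≤ μ := fun x => by
  rw [vertexGen_eq_filter, filter_apply]
  split_ifs <;> simp

theorem vertexGen_apply_of_mem {x : X} (hx : x ∈ vertices μ) :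
    vertexGen μ x = μ x := by
  rw [vertexGen_eq_filter, filter_apply_pos _ _ hx]

theorem vertices_subset_support (μ : X →₀ ℕ) :
    vertices μ ⊆ μ.support :=
  extremePoints_convexHull_subset

theorem coe_support_vertexGen (μ : X →₀ ℕ) :
    ((vertexGen μ).support : Set (X)) = vertices μ := by
  rw [vertexGen_eq_filter, support_filter, Finset.coe_filter]
  exact sep_eq_of_subset (vertices_subset_support μ)

theorem convexHull_vertices (μ : X →₀ ℕ) :
    convexHull ℝ (vertices μ) = convexHull ℝ (μ.support : Set (X)) :=
  μ.support.finite_toSet.convexHull_extremePoints_convexHull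

theorem convexHull_support_eq_of_vertexGen_eq (h : vertexGen μ = vertexGen ν) :
    convexHull ℝ (μ.support : Set (X)) = convexHull ℝ ν.support := by
  rw [← convexHull_vertices, ← coe_support_vertexGen, h, coe_support_vertexGen,
    convexHull_vertices]

theorem vertexGen_eq_filter_of_convexHull_eq
    (h : convexHull ℝ (μ.support : Set (X)) = convexHull ℝ ν.support) :
    vertexGen μ = μ.filter (· ∈ vertices ν) := by
  rw [vertexGen_eq_filter, vertices, h, vertices]

theorem filter_vertices_eq_filter_vertexGen
    (h : convexHull ℝ (μ.support : Set (X)) ⊆ convexHull ℝ ν.support) :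
    μ.filter (· ∈ vertices ν) = (vertexGen μ).filter (· ∈ vertices ν) := by
  ext y
  by_cases hy : y ∈ vertices ν
  · rw [filter_apply_pos _ _ hy, filter_apply_pos _ _ hy]
    by_cases hyμ : y ∈ (μ.support : Set (X))
    · exact (vertexGen_apply_of_mem
        (inter_extremePoints_subset_extremePoints_of_subset h ⟨subset_convexHull ℝ _ hyμ, hy⟩)).symm
    · have hμy : μ y = 0 := notMem_support_iff.1 hyμ
      have := vertexGen_le μ y
      omega
  · rw [filter_apply_neg _ _ hy, filter_apply_neg _ _ hy]

theorem convexHull_support_vertexGen_add (hν : ν.support ⊆ μ.support) :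
    convexHull ℝ ((vertexGen μ + ν).support : Set (X)) =
      convexHull ℝ μ.support := by
  rw [support_add_eq_union, Finset.coe_union, coe_support_vertexGen]
  apply (convexHull_mono (union_subset (vertices_subset_support μ) hν)).antisymm
  rw [← convexHull_vertices]
  exact convexHull_mono subset_union_left

theorem vertexGen_add_single {x : X} (hx : x ∈ (vertexGen μ).support) :
    vertexGen (μ + single x 1) = vertexGen μ + single x 1 := by
  rw [← Finset.mem_coe, coe_support_vertexGen] at hx
  have hsupp : (μ + single x 1).support = μ.support := by
    rw [support_add_eq_union, support_single x one_ne_zero, Finset.union_singleton,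
      Finset.insert_eq_of_mem (vertices_subset_support μ hx)]
  rw [vertexGen_eq_filter_of_convexHull_eq (congrArg _ (congrArg _ hsupp)), filter_add,
    ← vertexGen_eq_filter, filter_single_of_pos _ hx]

theorem vertexGen_vertexGen_add {μ' : X →₀ ℕ}
    (h : μ' ≤ μ - vertexGen μ) : vertexGen (vertexGen μ + μ') = vertexGen μ := by
  rw [vertexGen_eq_filter_of_convexHull_eq
      (convexHull_support_vertexGen_add (support_mono (h.trans tsub_le_self))),
    filter_add, (filter_eq_self_iff _ _).2, (filter_eq_zero_iff _ _).2, add_zero]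
  · intro x hx
    have := h x
    rw [tsub_apply, vertexGen_apply_of_mem hx] at this
    omega
  · intro x hx
    rw [← coe_support_vertexGen]
    exact mem_support_iff.2 hx

theorem vertexGen_add_congr (h : vertexGen μ = vertexGen ν) (ψ : X →₀ ℕ) :
    vertexGen (μ + ψ) = vertexGen (ν + ψ) := by
  have hull : convexHull ℝ ((μ + ψ).support : Set (X)) =
      convexHull ℝ (ν + ψ).support := by
    rw [support_add_eq_union, support_add_eq_union, Finset.coe_union, Finset.coe_union,
      ← convexHull_convexHull_union_left, convexHull_support_eq_of_vertexGen_eq h,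
      convexHull_convexHull_union_left]
  have hle {η : X →₀ ℕ} :
      convexHull ℝ (η.support : Set (X)) ⊆
        convexHull ℝ (η + ψ).support :=
    convexHull_mono (Finset.coe_subset.2 (support_mono le_self_add))
  rw [vertexGen_eq_filter_of_convexHull_eq hull, vertexGen_eq_filter, filter_add, filter_add,
    filter_vertices_eq_filter_vertexGen (hle.trans hull.subset),
    filter_vertices_eq_filter_vertexGen hle, h]

end VertexGen

/-- on `ℝ^d`, restricting a finite counting measure to the extreme points
of the convex hull of its support is a generator: it satisfies (H1) thinning,
(H2) additivity, (H3) idempotency and (H4) consistency. -/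
theorem vertexGen_isGenerator (d : ℕ) :
    (∀ μ : EuclideanSpace ℝ (Fin d) →₀ ℕ, vertexGen μ ≤ μ) ∧
    (∀ (μ : EuclideanSpace ℝ (Fin d) →₀ ℕ) (x), x ∈ (vertexGen μ).support →
      vertexGen (μ + Finsupp.single x 1) = vertexGen μ + Finsupp.single x 1) ∧
    (∀ μ μ' : EuclideanSpace ℝ (Fin d) →₀ ℕ, μ' ≤ μ - vertexGen μ →
      vertexGen (vertexGen μ + μ') = vertexGen μ) ∧
    (∀ μ μ' ψ : EuclideanSpace ℝ (Fin d) →₀ ℕ, μ' ≤ μ → vertexGen μ = vertexGen μ' →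
      vertexGen (μ + ψ) = vertexGen (μ' + ψ)) :=
  ⟨vertexGen_le, fun _ _ => vertexGen_add_single, fun _ _ => vertexGen_vertexGen_add,
    fun _ _ ψ _ h => vertexGen_add_congr h ψ⟩
end
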